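/- arXiv:math/0505615 — 6 statements merged into one kernel-verified Lean document; each statement's English description precedes it below -/
import Mathlib

section
/- Let k ≥ 1 be an integer and let ρ : ℂ² → ℝ be a polynomial function in the underlying real coordinates (i.e. ρ(z) = P(Re z₁, Im z₁, Re z₂, Im z₂) for some real polynomial P) which is homogeneous of degree 2k (ρ(t·z) = t^{2k}·ρ(z) for all real t ≥ 0 and z ∈ ℂ²) and satisfies ρ(z) > 0 for all z ≠ 0. Assume that at every point z ∈ ℂ² \ {0} the Levi matrix of u = log ρ is positive semidefinite and has determinant zero (i.e. u is plurisubharmonic and satisfies the homogeneous complex Monge–Ampère equation (dd^c u)² = 0 on ℂ² \ {0}). Then ρ(λ·z) = |λ|^{2k}·ρ(z) for every λ ∈ ℂ and z ∈ ℂ²; that is, ρ is a homogeneous polynomial of bidegree (k,k). -/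
open Complex Matrix
open scoped ComplexOrder

/-- The Wirtinger derivative `∂f/∂z_μ` of an `ℝ`-differentiable function `f : ℂⁿ → ℂ`. -/
noncomputable def wD {n : ℕ} (f : (Fin n → ℂ) → ℂ) (z : Fin n → ℂ) (μ : Fin n) : ℂ :=
  (1 / 2 : ℂ) *
    (fderiv ℝ f z (Pi.single μ 1) - Complex.I * fderiv ℝ f z (Pi.single μ Complex.I))

/-- The conjugate Wirtinger derivative `∂f/∂z̄_μ`. -/
noncomputable def wDbar {n : ℕ} (f : (Fin n → ℂ) → ℂ) (z : Fin n → ℂ) (μ : Fin n) : ℂ :=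
  (1 / 2 : ℂ) *
    (fderiv ℝ f z (Pi.single μ 1) + Complex.I * fderiv ℝ f z (Pi.single μ Complex.I))

/-- The Levi matrix `ρ_{μν̄} = ∂²ρ/∂z_μ∂z̄_ν` of a real-valued function `ρ : ℂⁿ → ℝ`. -/
noncomputable def levi {n : ℕ} (ρ : (Fin n → ℂ) → ℝ) (z : Fin n → ℂ) :
    Matrix (Fin n) (Fin n) ℂ :=
  Matrix.of fun μ ν => wD (fun w => wDbar (fun w' => (ρ w' : ℂ)) w ν) z μ

/-! Write `u = log ρ`. Homogeneity gives the Euler identities `Du(w) w = 2k` and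
`D²u(w)(w, w) = -2k`, so the second derivative of `θ ↦ u(e^{iθ} w)` at `0`, namely
`D²u(w)(i w, i w) - Du(w) w`, equals `D²u(w)(w, w) + D²u(w)(i w, i w)`, which is four times the
Levi form of `u` at `w` evaluated on `w`. Plurisubharmonicity therefore makes `u` convex along
every circle; being periodic there, it is constant, and the circle invariance of `ρ` combined
with its real homogeneity is the claim. -/

theorem re_mul_mul_conj_eq_add_apply_I_mul (B : ℂ →L[ℝ] ℂ →L[ℝ] ℝ) (a b : ℂ) :
    (a * (B 1 1 + I * B 1 I - I * B I 1 + B I I) * (starRingEnd ℂ) b).re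
      = B a b + B (I * a) (I * b) := by
  have hreal : ∀ c : ℂ, c = c.re • (1 : ℂ) + c.im • I := fun c => by simp
  have himag : ∀ c : ℂ, I * c = (-c.im) • (1 : ℂ) + c.re • I := fun c => by simp [Complex.ext_iff]
  rw [himag a, himag b, hreal a, hreal b]
  simp only [map_add, map_smul, _root_.add_apply, _root_.smul_apply,
    smul_eq_mul, mul_re, mul_im, add_re, add_im, sub_re, sub_im, ofReal_re, ofReal_im, I_re, I_im,
    conj_re, conj_im, smul_re, smul_im, one_re, one_im]
  ring

theorem levi_apply_eq_fderiv_fderiv {n : ℕ} {u : (Fin n → ℂ) → ℝ} {z : Fin n → ℂ}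
    (hu : ContDiffAt ℝ 2 u z) (μ ν : Fin n) :
    levi u z μ ν = (1 / 4 : ℂ) *
      (fderiv ℝ (fderiv ℝ u) z (Pi.single μ 1) (Pi.single ν 1)
        + I * fderiv ℝ (fderiv ℝ u) z (Pi.single μ 1) (Pi.single ν I)
        - I * fderiv ℝ (fderiv ℝ u) z (Pi.single μ I) (Pi.single ν 1)
        + fderiv ℝ (fderiv ℝ u) z (Pi.single μ I) (Pi.single ν I)) := by
  set H := fderiv ℝ (fderiv ℝ u) z
  have hdiff : ∀ᶠ w in nhds z, DifferentiableAt ℝ u w :=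
    (hu.eventually (by simp)).mono fun w hw => hw.differentiableAt (by norm_num)
  have hwDbar : (fun w => wDbar (fun w' => (u w' : ℂ)) w ν) =ᶠ[nhds z]
      fun w => (1 / 2 : ℂ) * (fderiv ℝ u w (Pi.single ν 1) + I * fderiv ℝ u w (Pi.single ν I)) := by
    filter_upwards [hdiff] with w hw
    have hofReal : HasFDerivAt (fun w' => (u w' : ℂ)) (ofRealCLM.comp (fderiv ℝ u w)) w :=
      ofRealCLM.hasFDerivAt.comp w hw.hasFDerivAt
    rw [wDbar, hofReal.fderiv]
    simp
  have happly : ∀ e : Fin n → ℂ, HasFDerivAt (fun w => fderiv ℝ u w e)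
      ((ContinuousLinearMap.apply ℝ ℝ e).comp H) z := fun e =>
    (ContinuousLinearMap.apply ℝ ℝ e).hasFDerivAt.comp z
      ((hu.fderiv_right le_rfl).differentiableAt one_ne_zero).hasFDerivAt
  have hderiv : HasFDerivAt
      (fun w => (1 / 2 : ℂ) * (fderiv ℝ u w (Pi.single ν 1) + I * fderiv ℝ u w (Pi.single ν I)))
      ((1 / 2 : ℂ) • (ofRealCLM.comp ((ContinuousLinearMap.apply ℝ ℝ (Pi.single ν 1)).comp H)
        + I • ofRealCLM.comp ((ContinuousLinearMap.apply ℝ ℝ (Pi.single ν I)).comp H))) z :=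
    (((ofRealCLM.hasFDerivAt.comp z (happly _)).add
      ((ofRealCLM.hasFDerivAt.comp z (happly _)).const_mul I)).const_mul (1 / 2 : ℂ))
  rw [levi, of_apply, wD, hwDbar.fderiv_eq, hderiv.fderiv]
  simp only [_root_.smul_apply, _root_.add_apply,
    ContinuousLinearMap.coe_comp, Function.comp_apply, ContinuousLinearMap.apply_apply,
    ofRealCLM_apply, smul_eq_mul]
  linear_combination -(1 / 4 : ℂ) * H (Pi.single μ I) (Pi.single ν I) * I_sq

theorem re_dotProduct_levi_mulVec_star {n : ℕ} {u : (Fin n → ℂ) → ℝ} {z : Fin n → ℂ}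
    (hu : ContDiffAt ℝ 2 u z) (c : Fin n → ℂ) :
    4 * (c ⬝ᵥ levi u z *ᵥ star c).re
      = fderiv ℝ (fderiv ℝ u) z c c + fderiv ℝ (fderiv ℝ u) z (I • c) (I • c) := by
  have hentry : ∀ μ ν, 4 * (c μ * (levi u z μ ν * star (c ν))).re
      = fderiv ℝ (fderiv ℝ u) z (Pi.single μ (c μ)) (Pi.single ν (c ν))
        + fderiv ℝ (fderiv ℝ u) z (Pi.single μ (I * c μ)) (Pi.single ν (I * c ν)) := by
    intro μ ν
    have h := re_mul_mul_conj_eq_add_apply_I_mul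
      ((fderiv ℝ (fderiv ℝ u) z).bilinearComp (ContinuousLinearMap.single ℝ (fun _ => ℂ) μ)
        (ContinuousLinearMap.single ℝ (fun _ => ℂ) ν)) (c μ) (c ν)
    simp only [ContinuousLinearMap.bilinearComp_apply, ContinuousLinearMap.single_apply] at h
    rw [levi_apply_eq_fderiv_fderiv hu, ← h, ← re_ofReal_mul, star_def]
    congr 1
    push_cast
    ring
  have hexpand : ∀ v w : Fin n → ℂ, fderiv ℝ (fderiv ℝ u) z v w
      = ∑ μ, ∑ ν, fderiv ℝ (fderiv ℝ u) z (Pi.single μ (v μ)) (Pi.single ν (w ν)) := by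
    intro v w
    conv_lhs => rw [← Finset.univ_sum_single v, ← Finset.univ_sum_single w]
    simp only [map_sum, _root_.sum_apply]
    exact Finset.sum_comm
  simp only [hexpand c c, hexpand (I • c) (I • c), Pi.smul_apply, smul_eq_mul, ← hentry,
    ← Finset.sum_add_distrib, dotProduct, mulVec, Finset.mul_sum, re_sum, Pi.star_apply]

section LogHomogeneous

variable {E : Type*} [NormedAddCommGroup E] [NormedSpace ℝ E] {u : E → ℝ} {a : ℝ} {w : E}

theorem fderiv_smul_apply_of_log_homogeneous
    (hhom : ∀ t : ℝ, 0 < t → u (t • w) = a * Real.log t + u w) {t : ℝ} (ht : 0 < t)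
    (hu : DifferentiableAt ℝ u (t • w)) :
    fderiv ℝ u (t • w) w = a / t := by
  have hray : HasDerivAt (fun s : ℝ => u (s • w)) (fderiv ℝ u (t • w) w) t := by
    have hsmul : HasDerivAt (fun s : ℝ => s • w) w t := by
      simpa using (hasDerivAt_id t).smul_const w
    exact hu.hasFDerivAt.comp_hasDerivAt t hsmul
  have hlog : HasDerivAt (fun s : ℝ => a * Real.log s + u w) (a / t) t := by
    simpa [div_eq_mul_inv] using ((Real.hasDerivAt_log ht.ne').const_mul a).add_const (u w)
  refine hray.unique (hlog.congr_of_eventuallyEq ?_)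
  filter_upwards [Ioi_mem_nhds ht] with s hs using hhom s hs

theorem fderiv_fderiv_apply_self_of_log_homogeneous
    (hhom : ∀ t : ℝ, 0 < t → u (t • w) = a * Real.log t + u w)
    (hu : ∀ t : ℝ, 0 < t → DifferentiableAt ℝ u (t • w)) (hu' : DifferentiableAt ℝ (fderiv ℝ u) w) :
    fderiv ℝ (fderiv ℝ u) w w w = -a := by
  have hray : HasDerivAt (fun s : ℝ => fderiv ℝ u (s • w) w) (fderiv ℝ (fderiv ℝ u) w w w) 1 := by
    have hd : HasFDerivAt (fderiv ℝ u) (fderiv ℝ (fderiv ℝ u) w) ((1 : ℝ) • w) := by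
      rw [one_smul]; exact hu'.hasFDerivAt
    have hsmul : HasDerivAt (fun s : ℝ => s • w) w 1 := by
      simpa using (hasDerivAt_id (1 : ℝ)).smul_const w
    have hcomp : HasDerivAt (fun s : ℝ => fderiv ℝ u (s • w)) (fderiv ℝ (fderiv ℝ u) w w) 1 :=
      hd.comp_hasDerivAt 1 hsmul
    simpa using hcomp.clm_apply (hasDerivAt_const 1 w)
  have hinv : HasDerivAt (fun s : ℝ => a / s) (-a) 1 := by
    simpa [div_eq_mul_inv] using (hasDerivAt_inv one_ne_zero).const_mul a
  refine hray.unique (hinv.congr_of_eventuallyEq ?_)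
  filter_upwards [Ioi_mem_nhds (one_pos : (0 : ℝ) < 1)] with s hs
  exact fderiv_smul_apply_of_log_homogeneous hhom hs (hu s hs)

end LogHomogeneous

theorem ConvexOn.eq_of_periodic {f : ℝ → ℝ} (hf : ConvexOn ℝ Set.univ f) {T : ℝ} (hT : 0 < T)
    (hper : Function.Periodic f T) (x y : ℝ) : f x = f y := by
  suffices h : ∀ a b : ℝ, f b ≤ f a from le_antisymm (h y x) (h x y)
  intro a b
  obtain ⟨m, hm⟩ := exists_nat_gt (|b - a| / T)
  rw [div_lt_iff₀ hT] at hm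
  have hb : b ∈ segment ℝ (a - m * T) (a + m * T) := by
    rw [segment_eq_Icc (by linarith [abs_nonneg (b - a)])]
    constructor <;> linarith [abs_lt.1 hm]
  simpa [hper.sub_nat_mul_eq, hper.nat_mul m a] using
    hf.le_on_segment (Set.mem_univ _) (Set.mem_univ _) hb

section Circle

variable {E : Type*} [NormedAddCommGroup E] [NormedSpace ℂ E]

theorem hasDerivAt_exp_mul_I_smul (z : E) (θ : ℝ) :
    HasDerivAt (fun θ : ℝ => exp (θ * I) • z) (I • exp (θ * I) • z) θ := by
  have h : HasDerivAt (fun θ : ℝ => exp (θ * I)) (exp (θ * I) * I) θ :=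
    (by simpa using (ofRealCLM.hasDerivAt (x := θ)).mul_const I :
      HasDerivAt (fun θ : ℝ => (θ : ℂ) * I) I θ).cexp
  simpa [smul_smul, mul_comm] using h.smul_const z

theorem hasDerivAt_fderiv_exp_mul_I_smul {u : E → ℝ} {z : E} {θ : ℝ}
    (hu : DifferentiableAt ℝ (fderiv ℝ u) (exp (θ * I) • z)) :
    HasDerivAt (fun θ : ℝ => fderiv ℝ u (exp (θ * I) • z) (I • exp (θ * I) • z))
      (fderiv ℝ (fderiv ℝ u) (exp (θ * I) • z) (I • exp (θ * I) • z) (I • exp (θ * I) • z)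
        - fderiv ℝ u (exp (θ * I) • z) (exp (θ * I) • z)) θ := by
  have hrot : HasDerivAt (fun θ : ℝ => I • exp (θ * I) • z) (I • I • exp (θ * I) • z) θ :=
    (hasDerivAt_exp_mul_I_smul z θ).const_smul I
  have hcomp : HasDerivAt (fun θ : ℝ => fderiv ℝ u (exp (θ * I) • z))
      (fderiv ℝ (fderiv ℝ u) (exp (θ * I) • z) (I • exp (θ * I) • z)) θ :=
    hu.hasFDerivAt.comp_hasDerivAt θ (hasDerivAt_exp_mul_I_smul z θ)
  have hII : I • I • exp (θ * I) • z = -(exp (θ * I) • z) := by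
    rw [smul_smul, I_mul_I, neg_one_smul]
  refine (hcomp.clm_apply hrot).congr_deriv ?_
  rw [hII, map_neg, sub_eq_add_neg]

end Circle

theorem fderiv_apply_self_le_fderiv_fderiv_I_smul {n : ℕ} {u : (Fin n → ℂ) → ℝ} {a : ℝ}
    {w : Fin n → ℂ} (hu : ∀ t : ℝ, 0 < t → ContDiffAt ℝ 2 u (t • w))
    (hhom : ∀ t : ℝ, 0 < t → u (t • w) = a * Real.log t + u w) (hpsh : (levi u w).PosSemidef) :
    fderiv ℝ u w w ≤ fderiv ℝ (fderiv ℝ u) w (I • w) (I • w) := by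
  have hd : ∀ t : ℝ, 0 < t → DifferentiableAt ℝ u (t • w) := fun t ht =>
    (hu t ht).differentiableAt (by norm_num)
  have hw : ContDiffAt ℝ 2 u w := by simpa using hu 1 one_pos
  have heuler₁ := fderiv_smul_apply_of_log_homogeneous hhom one_pos (hd 1 one_pos)
  have heuler₂ := fderiv_fderiv_apply_self_of_log_homogeneous hhom hd
    ((hw.fderiv_right (m := 1) le_rfl).differentiableAt one_ne_zero)
  have hlevi := re_dotProduct_levi_mulVec_star hw w
  have hnonneg := (Complex.le_def.1 (hpsh.dotProduct_mulVec_nonneg (star w))).1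
  rw [star_star, zero_re] at hnonneg
  simp only [one_smul, div_one] at heuler₁
  linarith

theorem apply_exp_mul_I_smul_of_levi_posSemidef {n : ℕ} {u : (Fin n → ℂ) → ℝ} {a : ℝ}
    (hu : ∀ z ≠ 0, ContDiffAt ℝ 2 u z)
    (hhom : ∀ z ≠ 0, ∀ t : ℝ, 0 < t → u (t • z) = a * Real.log t + u z)
    (hpsh : ∀ z ≠ 0, (levi u z).PosSemidef) (z : Fin n → ℂ) (θ : ℝ) :
    u (exp (θ * I) • z) = u z := by
  rcases eq_or_ne z 0 with rfl | hz
  · rw [smul_zero]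
  have hd1 : ∀ w ≠ 0, DifferentiableAt ℝ u w := fun w hw =>
    (hu w hw).differentiableAt (by norm_num)
  have hd2 : ∀ w ≠ 0, DifferentiableAt ℝ (fderiv ℝ u) w := fun w hw =>
    ((hu w hw).fderiv_right (m := 1) le_rfl).differentiableAt one_ne_zero
  have hcircle_ne : ∀ θ : ℝ, exp (θ * I) • z ≠ 0 := fun θ => smul_ne_zero (exp_ne_zero _) hz
  have hψ' : ∀ θ : ℝ, HasDerivAt (fun θ : ℝ => u (exp (θ * I) • z))
      (fderiv ℝ u (exp (θ * I) • z) (I • exp (θ * I) • z)) θ := fun θ =>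
    (hd1 _ (hcircle_ne θ)).hasFDerivAt.comp_hasDerivAt θ (hasDerivAt_exp_mul_I_smul z θ)
  have hconvex : ConvexOn ℝ Set.univ (fun θ : ℝ => u (exp (θ * I) • z)) := by
    refine convexOn_univ_of_deriv2_nonneg (fun θ => (hψ' θ).differentiableAt) ?_ fun θ => ?_
    · rw [funext fun θ => (hψ' θ).deriv]
      exact fun θ => (hasDerivAt_fderiv_exp_mul_I_smul (hd2 _ (hcircle_ne θ))).differentiableAt
    · rw [Function.iterate_succ_apply, Function.iterate_one, funext fun θ => (hψ' θ).deriv,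
        (hasDerivAt_fderiv_exp_mul_I_smul (hd2 _ (hcircle_ne θ))).deriv]
      have hw := hcircle_ne θ
      exact sub_nonneg.2 <| fderiv_apply_self_le_fderiv_fderiv_I_smul
        (fun t ht => hu _ (smul_ne_zero ht.ne' hw)) (hhom _ hw) (hpsh _ hw)
  have hperiodic : Function.Periodic (fun θ : ℝ => u (exp (θ * I) • z)) (2 * Real.pi) := fun θ => by
    simp only [ofReal_add, ofReal_mul, add_mul, exp_add, ofReal_ofNat, exp_two_pi_mul_I, mul_one]
  simpa using hconvex.eq_of_periodic Real.two_pi_pos hperiodic θ 0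

theorem apply_smul_eq_norm_pow_mul_of_levi_log_posSemidef {n m : ℕ} {ρ : (Fin n → ℂ) → ℝ}
    (hρ : ∀ z ≠ 0, ContDiffAt ℝ 2 ρ z)
    (hhom : ∀ t : ℝ, 0 ≤ t → ∀ z : Fin n → ℂ, ρ (t • z) = t ^ m * ρ z)
    (hpos : ∀ z ≠ 0, 0 < ρ z)
    (hpsh : ∀ z ≠ 0, (levi (fun w => Real.log (ρ w)) z).PosSemidef) (lam : ℂ) (z : Fin n → ℂ) :
    ρ (lam • z) = ‖lam‖ ^ m * ρ z := by
  have hcircle : ∀ θ : ℝ, ρ (exp (θ * I) • z) = ρ z := by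
    intro θ
    rcases eq_or_ne z 0 with rfl | hz
    · rw [smul_zero]
    refine Real.log_injOn_pos (hpos _ (smul_ne_zero (exp_ne_zero _) hz)) (hpos z hz) ?_
    refine apply_exp_mul_I_smul_of_levi_posSemidef (u := fun w => Real.log (ρ w)) (a := m)
      (fun w hw => (Real.contDiffAt_log.2 (hpos w hw).ne').comp w (hρ w hw)) (fun w hw t ht => ?_)
      hpsh z θ
    rw [hhom t ht.le, Real.log_mul (by positivity) (hpos w hw).ne', Real.log_pow]
  calc ρ (lam • z) = ρ (‖lam‖ • exp (lam.arg * I) • z) := by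
        rw [← coe_smul, ← mul_smul, norm_mul_exp_arg_mul_I]
    _ = ‖lam‖ ^ m * ρ z := by rw [hhom _ (norm_nonneg lam), hcircle]

theorem ContDiff.eval_mvPolynomial {σ E : Type*} [NormedAddCommGroup E] [NormedSpace ℝ E]
    {n : WithTop ℕ∞} {f : E → σ → ℝ} (hf : ∀ i, ContDiff ℝ n (f · i)) (P : MvPolynomial σ ℝ) :
    ContDiff ℝ n (fun x => MvPolynomial.eval (f x) P) := by
  induction P using MvPolynomial.induction_on with
  | C a => simpa using contDiff_const
  | add p q hp hq => simpa using hp.add hq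
  | mul_X p i hp => simpa using hp.mul (hf i)

theorem burns_problem_dim_two_general (k : ℕ) (ρ : (Fin 2 → ℂ) → ℝ)
    (P : MvPolynomial (Fin 4) ℝ)
    (hpoly : ∀ z : Fin 2 → ℂ,
      ρ z = MvPolynomial.eval ![(z 0).re, (z 0).im, (z 1).re, (z 1).im] P)
    (hhom : ∀ t : ℝ, 0 ≤ t → ∀ z : Fin 2 → ℂ, ρ (t • z) = t ^ (2 * k) * ρ z)
    (hpos : ∀ z : Fin 2 → ℂ, z ≠ 0 → 0 < ρ z)
    (hpsh : ∀ z : Fin 2 → ℂ, z ≠ 0 →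
      (levi (fun w => Real.log (ρ w)) z).PosSemidef) :
    ∀ (lam : ℂ) (z : Fin 2 → ℂ), ρ (lam • z) = ‖lam‖ ^ (2 * k) * ρ z := by
  have hre : ∀ j, ContDiff ℝ 2 (fun z : Fin 2 → ℂ => (z j).re) := fun j =>
    reCLM.contDiff.comp (contDiff_apply ℝ ℂ j)
  have him : ∀ j, ContDiff ℝ 2 (fun z : Fin 2 → ℂ => (z j).im) := fun j =>
    imCLM.contDiff.comp (contDiff_apply ℝ ℂ j)
  have hρ : ContDiff ℝ 2 ρ := by
    rw [funext hpoly]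
    refine ContDiff.eval_mvPolynomial (fun i => ?_) P
    fin_cases i <;> simp [hre, him]
  exact apply_smul_eq_norm_pow_mul_of_levi_log_posSemidef (fun z _ => hρ.contDiffAt) hhom hpos hpsh

/-- Burns's problem in dimension 2: a positive plurisubharmonic homogeneous polynomial
`ρ` of degree `2k` on `ℂ²` whose logarithm solves the homogeneous complex Monge–Ampère
equation is bihomogeneous of bidegree `(k, k)`. -/
theorem burns_problem_dim_two (k : ℕ) (hk : 1 ≤ k) (ρ : (Fin 2 → ℂ) → ℝ)
    (P : MvPolynomial (Fin 4) ℝ)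
    (hpoly : ∀ z : Fin 2 → ℂ,
      ρ z = MvPolynomial.eval ![(z 0).re, (z 0).im, (z 1).re, (z 1).im] P)
    (hhom : ∀ t : ℝ, 0 ≤ t → ∀ z : Fin 2 → ℂ, ρ (t • z) = t ^ (2 * k) * ρ z)
    (hpos : ∀ z : Fin 2 → ℂ, z ≠ 0 → 0 < ρ z)
    (hpsh : ∀ z : Fin 2 → ℂ, z ≠ 0 →
      (levi (fun w => Real.log (ρ w)) z).PosSemidef)
    (hMA : ∀ z : Fin 2 → ℂ, z ≠ 0 →
      (levi (fun w => Real.log (ρ w)) z).det = 0) :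
    ∀ (lam : ℂ) (z : Fin 2 → ℂ), ρ (lam • z) = ‖lam‖ ^ (2 * k) * ρ z :=
  burns_problem_dim_two_general k ρ P hpoly hhom hpos hpsh
end

section
/- Let U ⊆ ℂ² be open, ρ : U → ℝ of class C² with ρ(z) > 0, Levi matrix H(ρ)(z) positive definite, and (∂ρ/∂z₁(z), ∂ρ/∂z₂(z)) ≠ (0,0) at a point z ∈ U. Let Z(z) be the complex gradient of ρ at z. Then Σ_μ Z^μ(z)·(∂²(log ρ)/∂z_μ∂z̄_ν)(z) = 0 for ν = 1,2 (i.e. Z(z) lies in the annihilator of the Levi form of log ρ at z) if and only if Z(ρ)(z) := Σ_μ Z^μ(z)·∂ρ/∂z_μ(z) = ρ(z). -/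
/-! Away from the zeros of `ρ`, `∂∂̄ log ρ = ρ⁻¹ ∂∂̄ρ - ρ⁻² ∂ρ ⊗ ∂̄ρ`. Contracting with the complex
gradient `Z`, which satisfies `Z ⌟ ∂∂̄ρ = ∂̄ρ`, gives `Z ⌟ ∂∂̄ log ρ = ∂̄ρ · (ρ - Z(ρ)) / ρ²`.
Since `ρ` is real, `∂̄ρ` is the conjugate of `∂ρ`, hence nonzero, so the contraction vanishes
exactly when `Z(ρ) = ρ`. -/

open Complex Matrix
open scoped ComplexOrder

open Filter Topology ComplexConjugate

theorem fderiv_ofReal_comp {E : Type*} [NormedAddCommGroup E] [NormedSpace ℝ E] (h : E → ℝ)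
    (x : E) :
    fderiv ℝ (fun y => (h y : ℂ)) x = ofRealCLM.comp (fderiv ℝ h x) := by
  by_cases hh : DifferentiableAt ℝ h x
  · exact (ofRealCLM.hasFDerivAt.comp x hh.hasFDerivAt).fderiv
  · have hc : ¬ DifferentiableAt ℝ (fun y => (h y : ℂ)) x := fun hc =>
      hh (reCLM.differentiableAt.comp x hc)
    rw [fderiv_zero_of_not_differentiableAt hh, fderiv_zero_of_not_differentiableAt hc,
      ContinuousLinearMap.comp_zero]

section Wirtinger

variable {n : ℕ}

theorem wD_ofReal (h : (Fin n → ℂ) → ℝ) (z : Fin n → ℂ) (μ : Fin n) :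
    wD (fun w => (h w : ℂ)) z μ =
      (1 / 2 : ℂ) * (fderiv ℝ h z (Pi.single μ 1) - I * fderiv ℝ h z (Pi.single μ I)) := by
  simp [wD, fderiv_ofReal_comp]

theorem wDbar_ofReal (h : (Fin n → ℂ) → ℝ) (z : Fin n → ℂ) (μ : Fin n) :
    wDbar (fun w => (h w : ℂ)) z μ =
      (1 / 2 : ℂ) * (fderiv ℝ h z (Pi.single μ 1) + I * fderiv ℝ h z (Pi.single μ I)) := by
  simp [wDbar, fderiv_ofReal_comp]

theorem wDbar_ofReal_eq_conj_wD (h : (Fin n → ℂ) → ℝ) (z : Fin n → ℂ) (μ : Fin n) :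
    wDbar (fun w => (h w : ℂ)) z μ = conj (wD (fun w => (h w : ℂ)) z μ) := by
  simp only [wD_ofReal, wDbar_ofReal, map_mul, map_sub, map_div₀, map_one, map_ofNat,
    conj_ofReal, conj_I]
  ring

theorem wD_real_comp {g : ℝ → ℝ} {g' : ℝ} {h : (Fin n → ℂ) → ℝ} {z : Fin n → ℂ}
    (hg : HasDerivAt g g' (h z)) (hh : DifferentiableAt ℝ h z) (μ : Fin n) :
    wD (fun w => (g (h w) : ℂ)) z μ = g' * wD (fun w => (h w : ℂ)) z μ := by
  have hd : HasFDerivAt (fun w => g (h w)) (g' • fderiv ℝ h z) z :=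
    hg.comp_hasFDerivAt z hh.hasFDerivAt
  simp only [wD_ofReal, hd.fderiv, _root_.smul_apply, smul_eq_mul, ofReal_mul]
  ring

theorem wDbar_real_comp {g : ℝ → ℝ} {g' : ℝ} {h : (Fin n → ℂ) → ℝ} {z : Fin n → ℂ}
    (hg : HasDerivAt g g' (h z)) (hh : DifferentiableAt ℝ h z) (μ : Fin n) :
    wDbar (fun w => (g (h w) : ℂ)) z μ = g' * wDbar (fun w => (h w : ℂ)) z μ := by
  simp only [wDbar_ofReal_eq_conj_wD, wD_real_comp hg hh, map_mul, conj_ofReal]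

theorem wD_mul {f g : (Fin n → ℂ) → ℂ} {z : Fin n → ℂ}
    (hf : DifferentiableAt ℝ f z) (hg : DifferentiableAt ℝ g z) (μ : Fin n) :
    wD (fun w => f w * g w) z μ = wD f z μ * g z + f z * wD g z μ := by
  simp only [wD, fderiv_fun_mul hf hg, _root_.add_apply, _root_.smul_apply, smul_eq_mul]
  ring

theorem Filter.EventuallyEq.wD_eq {f g : (Fin n → ℂ) → ℂ} {z : Fin n → ℂ}
    (h : f =ᶠ[𝓝 z] g) (μ : Fin n) : wD f z μ = wD g z μ := by
  simp only [wD, h.fderiv_eq]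

theorem differentiableAt_wDbar_ofReal {ρ : (Fin n → ℂ) → ℝ} {z : Fin n → ℂ}
    (hρ : ContDiffAt ℝ 2 ρ z) (ν : Fin n) :
    DifferentiableAt ℝ (fun w => wDbar (fun x => (ρ x : ℂ)) w ν) z := by
  have hD : DifferentiableAt ℝ (fderiv ℝ ρ) z :=
    (hρ.fderiv_right (m := 1) le_rfl).differentiableAt one_ne_zero
  have hformula : (fun w => wDbar (fun x => (ρ x : ℂ)) w ν) = fun w =>
      (1 / 2 : ℂ) * (fderiv ℝ ρ w (Pi.single ν 1) + I * fderiv ℝ ρ w (Pi.single ν I)) :=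
    funext fun w => wDbar_ofReal ρ w ν
  rw [hformula]
  fun_prop

theorem levi_log_apply {ρ : (Fin n → ℂ) → ℝ} {z : Fin n → ℂ}
    (hρ : ContDiffAt ℝ 2 ρ z) (hne : ρ z ≠ 0) (μ ν : Fin n) :
    levi (fun w => Real.log (ρ w)) z μ ν =
      (ρ z : ℂ)⁻¹ * levi ρ z μ ν -
        ((ρ z : ℂ) ^ 2)⁻¹ * wD (fun w => (ρ w : ℂ)) z μ * wDbar (fun w => (ρ w : ℂ)) z ν := by
  have hnear : ∀ᶠ w in 𝓝 z, DifferentiableAt ℝ ρ w ∧ ρ w ≠ 0 :=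
    ((hρ.eventually (by simp)).mono fun w hw => hw.differentiableAt two_ne_zero).and
      (hρ.continuousAt.eventually_ne hne)
  have hdbar : (fun w => wDbar (fun x => (Real.log (ρ x) : ℂ)) w ν) =ᶠ[𝓝 z]
      fun w => (((ρ w)⁻¹ : ℝ) : ℂ) * wDbar (fun x => (ρ x : ℂ)) w ν :=
    hnear.mono fun w hw => wDbar_real_comp (Real.hasDerivAt_log hw.2) hw.1 ν
  have hdiff : DifferentiableAt ℝ ρ z := hρ.differentiableAt two_ne_zero
  have hinv : DifferentiableAt ℝ (fun w => (((ρ w)⁻¹ : ℝ) : ℂ)) z :=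
    ofRealCLM.differentiableAt.comp z (hdiff.inv hne)
  simp only [levi, Matrix.of_apply]
  rw [hdbar.wD_eq, wD_mul hinv (differentiableAt_wDbar_ofReal hρ ν),
    wD_real_comp (hasDerivAt_inv hne) hdiff]
  push_cast
  ring

theorem sum_mul_levi_log {ρ : (Fin n → ℂ) → ℝ} {z : Fin n → ℂ}
    (hρ : ContDiffAt ℝ 2 ρ z) (hne : ρ z ≠ 0) {Z : Fin n → ℂ}
    (hZ : ∀ ν, ∑ μ, Z μ * levi ρ z μ ν = wDbar (fun w => (ρ w : ℂ)) z ν) (ν : Fin n) :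
    ∑ μ, Z μ * levi (fun w => Real.log (ρ w)) z μ ν =
      wDbar (fun w => (ρ w : ℂ)) z ν *
        (((ρ z : ℂ) - ∑ μ, Z μ * wD (fun w => (ρ w : ℂ)) z μ) / (ρ z : ℂ) ^ 2) := by
  have hne' : (ρ z : ℂ) ≠ 0 := ofReal_ne_zero.mpr hne
  calc ∑ μ, Z μ * levi (fun w => Real.log (ρ w)) z μ ν
      = (ρ z : ℂ)⁻¹ * ∑ μ, Z μ * levi ρ z μ ν - ((ρ z : ℂ) ^ 2)⁻¹ *
          wDbar (fun w => (ρ w : ℂ)) z ν * ∑ μ, Z μ * wD (fun w => (ρ w : ℂ)) z μ := by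
        simp only [levi_log_apply hρ hne, Finset.mul_sum, ← Finset.sum_sub_distrib]
        exact Finset.sum_congr rfl fun μ _ => by ring
    _ = _ := by
        rw [hZ ν]
        field_simp

end Wirtinger

theorem annihilator_iff_MongeAmpere_general (U : Set (Fin 2 → ℂ)) (hU : IsOpen U)
    (ρ : (Fin 2 → ℂ) → ℝ) (hρ : ContDiffOn ℝ 2 ρ U)
    (z : Fin 2 → ℂ) (hz : z ∈ U) (hpos : 0 < ρ z)
    (hgrad : ¬ (wD (fun w => (ρ w : ℂ)) z 0 = 0 ∧ wD (fun w => (ρ w : ℂ)) z 1 = 0))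
    (Z : Fin 2 → ℂ)
    (hZ : ∀ ν : Fin 2, ∑ μ : Fin 2, Z μ * levi ρ z μ ν = wDbar (fun w => (ρ w : ℂ)) z ν) :
    (∀ ν : Fin 2, ∑ μ : Fin 2, Z μ * levi (fun w => Real.log (ρ w)) z μ ν = 0) ↔
      ∑ μ : Fin 2, Z μ * wD (fun w => (ρ w : ℂ)) z μ = (ρ z : ℂ) := by
  have hρz : ContDiffAt ℝ 2 ρ z := hρ.contDiffAt (hU.mem_nhds hz)
  obtain ⟨ν, hν⟩ : ∃ ν, wD (fun w => (ρ w : ℂ)) z ν ≠ 0 := by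
    by_contra! h
    exact hgrad ⟨h 0, h 1⟩
  have hν' : wDbar (fun w => (ρ w : ℂ)) z ν ≠ 0 := by
    rwa [wDbar_ofReal_eq_conj_wD, map_ne_zero]
  have hρ2 : (ρ z : ℂ) ^ 2 ≠ 0 := pow_ne_zero 2 (ofReal_ne_zero.mpr hpos.ne')
  simp only [sum_mul_levi_log hρz hpos.ne' hZ]
  constructor
  · intro h
    have hdiv := (mul_eq_zero.mp (h ν)).resolve_left hν'
    exact (sub_eq_zero.mp ((div_eq_zero_iff.mp hdiv).resolve_right hρ2)).symm
  · intro h ν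
    rw [h, sub_self, zero_div, mul_zero]

/-- At a point where `ρ > 0`, the Levi matrix of `ρ` is positive definite and `∂ρ ≠ 0`,
the complex gradient `Z` annihilates the Levi form of `log ρ` iff `Z(ρ) = ρ`. -/
theorem annihilator_iff_MongeAmpere (U : Set (Fin 2 → ℂ)) (hU : IsOpen U)
    (ρ : (Fin 2 → ℂ) → ℝ) (hρ : ContDiffOn ℝ 2 ρ U)
    (z : Fin 2 → ℂ) (hz : z ∈ U) (hpos : 0 < ρ z)
    (hPD : (levi ρ z).PosDef)
    (hgrad : ¬ (wD (fun w => (ρ w : ℂ)) z 0 = 0 ∧ wD (fun w => (ρ w : ℂ)) z 1 = 0))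
    (Z : Fin 2 → ℂ)
    (hZ : ∀ ν : Fin 2, ∑ μ : Fin 2, Z μ * levi ρ z μ ν = wDbar (fun w => (ρ w : ℂ)) z ν) :
    (∀ ν : Fin 2, ∑ μ : Fin 2, Z μ * levi (fun w => Real.log (ρ w)) z μ ν = 0) ↔
      ∑ μ : Fin 2, Z μ * wD (fun w => (ρ w : ℂ)) z μ = (ρ z : ℂ) :=
  annihilator_iff_MongeAmpere_general U hU ρ hρ z hz hpos hgrad Z hZ
end

section
/- Let U ⊆ ℂ² be open and ρ : U → ℝ smooth with ρ > 0 and Levi matrix H(ρ) positive definite on U, satisfying the Monge–Ampère equation Z(ρ) := Σ_μ Z^μ·∂ρ/∂z_μ = ρ on U, where Z is the complex gradient; let L be the (1,0) vector field with components L¹ = ∂ρ/∂z₂, L² = −∂ρ/∂z₁. Then at every z ∈ U there exist ψ₁, ψ₂ ∈ ℂ such that −Z̄(L^μ)(z) = ψ₁·L^μ(z) and L(conj(Z^μ))(z) = ψ₂·conj(L^μ(z)) for μ = 1,2; i.e. the bracket [L, Z̄], whose (1,0)-part has components −Z̄(L^μ) and whose (0,1)-part has components L(conj(Z^μ)), is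 pointwise a combination ψ₁·L + ψ₂·L̄. -/
open Complex Matrix
open scoped ComplexOrder

/-- The tangential `(1,0)` vector field `L` with components `L¹ = ∂ρ/∂z₂`,
`L² = −∂ρ/∂z₁`. -/
noncomputable def Lfield (ρ : (Fin 2 → ℂ) → ℝ) (z : Fin 2 → ℂ) : Fin 2 → ℂ :=
  ![wD (fun w => (ρ w : ℂ)) z 1, -(wD (fun w => (ρ w : ℂ)) z 0)]

/-- Action of a `(1,0)` vector field `W`: `Wf = Σ_μ W^μ ∂f/∂z_μ`. -/
noncomputable def op10 {n : ℕ} (W : (Fin n → ℂ) → Fin n → ℂ) (f : (Fin n → ℂ) → ℂ)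
    (z : Fin n → ℂ) : ℂ :=
  ∑ μ : Fin n, W z μ * wD f z μ

/-- Action of the conjugate field `W̄`: `W̄f = Σ_μ conj(W^μ) ∂f/∂z̄_μ`. -/
noncomputable def op01 {n : ℕ} (W : (Fin n → ℂ) → Fin n → ℂ) (f : (Fin n → ℂ) → ℂ)
    (z : Fin n → ℂ) : ℂ :=
  ∑ μ : Fin n, (starRingEnd ℂ) (W z μ) * wDbar f z μ

section Helpers

variable {n : ℕ} {f g : (Fin n → ℂ) → ℂ} {z : Fin n → ℂ}

lemma wDbar_congr (h : f =ᶠ[nhds z] g) (μ : Fin n) : wDbar f z μ = wDbar g z μ := by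
  simp only [wDbar, h.fderiv_eq]

lemma fderiv_conj_apply (f : (Fin n → ℂ) → ℂ) (z v) :
    fderiv ℝ (fun w => (starRingEnd ℂ) (f w)) z v = (starRingEnd ℂ) (fderiv ℝ f z v) := by
  have h : fderiv ℝ (fun w => (starRingEnd ℂ) (f w)) z
      = (Complex.conjCLE : ℂ →L[ℝ] ℂ).comp (fderiv ℝ f z) := Complex.conjCLE.comp_fderiv
  rw [h]; rfl

lemma wD_conj (f : (Fin n → ℂ) → ℂ) (z : Fin n → ℂ) (μ : Fin n) :
    wD (fun w => (starRingEnd ℂ) (f w)) z μ = (starRingEnd ℂ) (wDbar f z μ) := by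
  simp only [wD, wDbar, fderiv_conj_apply, _root_.map_mul, map_add, map_sub, Complex.conj_I,
    _root_.map_one, map_div₀, map_ofNat]
  ring

lemma wDbar_conj (f : (Fin n → ℂ) → ℂ) (z : Fin n → ℂ) (μ : Fin n) :
    wDbar (fun w => (starRingEnd ℂ) (f w)) z μ = (starRingEnd ℂ) (wD f z μ) := by
  simp only [wD, wDbar, fderiv_conj_apply, _root_.map_mul, map_add, map_sub, Complex.conj_I,
    _root_.map_one, map_div₀, map_ofNat]
  ring

lemma contDiffAt_wD {m : ℕ} (hf : ContDiffAt ℝ (m + 1 : ℕ) f z) (μ : Fin n) :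
    ContDiffAt ℝ m (fun w => wD f w μ) z := by
  have h : ContDiffAt ℝ m (fderiv ℝ f) z := hf.fderiv_right (by exact_mod_cast le_rfl)
  have h1 : ContDiffAt ℝ m (fun w => fderiv ℝ f w (Pi.single μ 1)) z :=
    h.clm_apply contDiffAt_const
  have h2 : ContDiffAt ℝ m (fun w => fderiv ℝ f w (Pi.single μ Complex.I)) z :=
    h.clm_apply contDiffAt_const
  exact contDiffAt_const.mul (h1.sub (contDiffAt_const.mul h2))

lemma contDiffAt_wDbar {m : ℕ} (hf : ContDiffAt ℝ (m + 1 : ℕ) f z) (μ : Fin n) :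
    ContDiffAt ℝ m (fun w => wDbar f w μ) z := by
  have h : ContDiffAt ℝ m (fderiv ℝ f) z := hf.fderiv_right (by exact_mod_cast le_rfl)
  have h1 : ContDiffAt ℝ m (fun w => fderiv ℝ f w (Pi.single μ 1)) z :=
    h.clm_apply contDiffAt_const
  have h2 : ContDiffAt ℝ m (fun w => fderiv ℝ f w (Pi.single μ Complex.I)) z :=
    h.clm_apply contDiffAt_const
  exact contDiffAt_const.mul (h1.add (contDiffAt_const.mul h2))

lemma wDbar_mul (hf : DifferentiableAt ℝ f z) (hg : DifferentiableAt ℝ g z) (μ : Fin n) :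
    wDbar (fun w => f w * g w) z μ = f z * wDbar g z μ + g z * wDbar f z μ := by
  simp only [wDbar, fderiv_fun_mul hf hg, ContinuousLinearMap.add_apply,
    ContinuousLinearMap.smul_apply, smul_eq_mul]
  ring

lemma wDbar_add (hf : DifferentiableAt ℝ f z) (hg : DifferentiableAt ℝ g z) (μ : Fin n) :
    wDbar (fun w => f w + g w) z μ = wDbar f z μ + wDbar g z μ := by
  simp only [wDbar, fderiv_fun_add hf hg, ContinuousLinearMap.add_apply]
  ring

lemma wDbar_neg (μ : Fin n) :
    wDbar (fun w => -(f w)) z μ = -(wDbar f z μ) := by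
  simp only [wDbar, fderiv_fun_neg, ContinuousLinearMap.neg_apply]
  ring

/-- derivative of w ↦ fderiv f w v -/
lemma fderiv_fderiv_apply (hF : DifferentiableAt ℝ (fderiv ℝ f) z) (v u : Fin n → ℂ) :
    fderiv ℝ (fun w => fderiv ℝ f w v) z u = fderiv ℝ (fderiv ℝ f) z u v := by
  rw [fderiv_clm_apply hF (differentiableAt_const v)]
  simp

lemma fderiv_wD_apply (hF : DifferentiableAt ℝ (fderiv ℝ f) z) (μ : Fin n) (u : Fin n → ℂ) :
    fderiv ℝ (fun w => wD f w μ) z u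
      = (1 / 2 : ℂ) * (fderiv ℝ (fderiv ℝ f) z u (Pi.single μ 1)
          - Complex.I * fderiv ℝ (fderiv ℝ f) z u (Pi.single μ Complex.I)) := by
  have h1 : DifferentiableAt ℝ (fun w => fderiv ℝ f w (Pi.single μ 1)) z :=
    hF.clm_apply (differentiableAt_const _)
  have h2 : DifferentiableAt ℝ (fun w => fderiv ℝ f w (Pi.single μ Complex.I)) z :=
    hF.clm_apply (differentiableAt_const _)
  have : (fun w => wD f w μ) = fun w => (1 / 2 : ℂ) *
      (fderiv ℝ f w (Pi.single μ 1) - Complex.I * fderiv ℝ f w (Pi.single μ Complex.I)) := rfl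
  rw [this, fderiv_const_mul ((h1.fun_sub (h2.const_mul Complex.I))),
    ContinuousLinearMap.smul_apply]
  rw [fderiv_fun_sub h1 (h2.const_mul Complex.I), ContinuousLinearMap.sub_apply,
    fderiv_const_mul h2, ContinuousLinearMap.smul_apply,
    fderiv_fderiv_apply hF, fderiv_fderiv_apply hF]
  simp [smul_eq_mul]

lemma fderiv_wDbar_apply (hF : DifferentiableAt ℝ (fderiv ℝ f) z) (μ : Fin n) (u : Fin n → ℂ) :
    fderiv ℝ (fun w => wDbar f w μ) z u
      = (1 / 2 : ℂ) * (fderiv ℝ (fderiv ℝ f) z u (Pi.single μ 1)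
          + Complex.I * fderiv ℝ (fderiv ℝ f) z u (Pi.single μ Complex.I)) := by
  have h1 : DifferentiableAt ℝ (fun w => fderiv ℝ f w (Pi.single μ 1)) z :=
    hF.clm_apply (differentiableAt_const _)
  have h2 : DifferentiableAt ℝ (fun w => fderiv ℝ f w (Pi.single μ Complex.I)) z :=
    hF.clm_apply (differentiableAt_const _)
  have : (fun w => wDbar f w μ) = fun w => (1 / 2 : ℂ) *
      (fderiv ℝ f w (Pi.single μ 1) + Complex.I * fderiv ℝ f w (Pi.single μ Complex.I)) := rfl
  rw [this, fderiv_const_mul ((h1.fun_add (h2.const_mul Complex.I))),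
    ContinuousLinearMap.smul_apply]
  rw [fderiv_fun_add h1 (h2.const_mul Complex.I), ContinuousLinearMap.add_apply,
    fderiv_const_mul h2, ContinuousLinearMap.smul_apply,
    fderiv_fderiv_apply hF, fderiv_fderiv_apply hF]
  simp [smul_eq_mul]

/-- The mixed Wirtinger derivatives commute for C² functions. -/
lemma wDbar_wD_comm (hf : ContDiffAt ℝ 2 f z) (μ ν : Fin n) :
    wDbar (fun w => wD f w μ) z ν = wD (fun w => wDbar f w ν) z μ := by
  have hF : DifferentiableAt ℝ (fderiv ℝ f) z :=
    (hf.fderiv_right (m := 1) (by norm_num)).differentiableAt (by norm_num)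
  have hs : IsSymmSndFDerivAt ℝ f z := hf.isSymmSndFDerivAt (by simp)
  have L : wDbar (fun w => wD f w μ) z ν = (1 / 2 : ℂ) *
      (fderiv ℝ (fun w => wD f w μ) z (Pi.single ν 1)
        + Complex.I * fderiv ℝ (fun w => wD f w μ) z (Pi.single ν Complex.I)) := rfl
  have R : wD (fun w => wDbar f w ν) z μ = (1 / 2 : ℂ) *
      (fderiv ℝ (fun w => wDbar f w ν) z (Pi.single μ 1)
        - Complex.I * fderiv ℝ (fun w => wDbar f w ν) z (Pi.single μ Complex.I)) := rfl
  rw [L, R, fderiv_wD_apply hF, fderiv_wD_apply hF, fderiv_wDbar_apply hF,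
    fderiv_wDbar_apply hF,
    hs.eq (Pi.single ν 1) (Pi.single μ 1), hs.eq (Pi.single ν 1) (Pi.single μ Complex.I),
    hs.eq (Pi.single ν Complex.I) (Pi.single μ 1),
    hs.eq (Pi.single ν Complex.I) (Pi.single μ Complex.I)]
  ring

end Helpers

/-- The bracket `[L, Z̄]` is pointwise a combination `ψ₁·L + ψ₂·L̄`. -/
theorem bracket_L_Zbar (U : Set (Fin 2 → ℂ)) (hU : IsOpen U)
    (ρ : (Fin 2 → ℂ) → ℝ) (hρ : ContDiffOn ℝ (⊤ : ℕ∞) ρ U)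
    (hpos : ∀ z ∈ U, 0 < ρ z)
    (hPD : ∀ z ∈ U, (levi ρ z).PosDef)
    (Z : (Fin 2 → ℂ) → Fin 2 → ℂ)
    (hZ : ∀ z ∈ U, ∀ ν : Fin 2,
      ∑ μ : Fin 2, Z z μ * levi ρ z μ ν = wDbar (fun w => (ρ w : ℂ)) z ν)
    (hMA : ∀ z ∈ U, ∑ μ : Fin 2, Z z μ * wD (fun w => (ρ w : ℂ)) z μ = (ρ z : ℂ)) :
    ∀ z ∈ U, ∃ ψ₁ ψ₂ : ℂ, ∀ μ : Fin 2,
      -(op01 Z (fun w => Lfield ρ w μ) z) = ψ₁ * Lfield ρ z μ ∧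
      op10 (Lfield ρ) (fun w => (starRingEnd ℂ) (Z w μ)) z =
        ψ₂ * (starRingEnd ℂ) (Lfield ρ z μ) := by
  intro z hz
  classical
  set ρc : (Fin 2 → ℂ) → ℂ := fun w => (ρ w : ℂ) with hρcdef
  -- smoothness of ρc at points of U, any order
  have hsm : ∀ (m : ℕ), ∀ w ∈ U, ContDiffAt ℝ m ρc w := by
    intro m w hw
    have : ContDiffOn ℝ (⊤ : ℕ∞) ρc U := Complex.ofRealCLM.contDiff.comp_contDiffOn hρ
    exact (this.contDiffAt (hU.mem_nhds hw)).of_le (by exact_mod_cast (le_top : (m : ℕ∞) ≤ ⊤))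
  -- conjugation facts
  have hconjQ : ∀ (w : Fin 2 → ℂ) (ν : Fin 2),
      (starRingEnd ℂ) (wDbar ρc w ν) = wD ρc w ν := by
    intro w ν
    rw [← wD_conj ρc w ν]
    congr 1
    funext x
    exact Complex.conj_ofReal (ρ x)
  -- mixed derivative = levi entries
  have hlev : ∀ w ∈ U, ∀ (μ ν : Fin 2),
      wDbar (fun x => wD ρc x μ) w ν = levi ρ w μ ν := by
    intro w hw μ ν
    exact wDbar_wD_comm ((hsm 2 w hw)) μ ν
  -- hermitian symmetry of levi
  have hherm : ∀ (μ ν : Fin 2), (starRingEnd ℂ) (levi ρ z μ ν) = levi ρ z ν μ := by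
    intro μ ν
    have h1 : (starRingEnd ℂ) (levi ρ z μ ν)
        = wDbar (fun w => (starRingEnd ℂ) (wDbar ρc w ν)) z μ :=
      (wDbar_conj (fun w => wDbar ρc w ν) z μ).symm
    rw [h1]
    have h2 : (fun w => (starRingEnd ℂ) (wDbar ρc w ν)) = fun w => wD ρc w ν := by
      funext w; exact hconjQ w ν
    rw [h2]
    exact wDbar_wD_comm ((hsm 2 z hz)) ν μ
  -- differentiability facts at z
  have hdP : ∀ μ : Fin 2, DifferentiableAt ℝ (fun w => wD ρc w μ) z := by
    intro μ
    exact (contDiffAt_wD (m := 1) (hsm _ z hz) μ).differentiableAt (by norm_cast)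
  have hdQ : ∀ ν : Fin 2, DifferentiableAt ℝ (fun w => wDbar ρc w ν) z := by
    intro ν
    exact (contDiffAt_wDbar (m := 1) (hsm _ z hz) ν).differentiableAt (by norm_cast)
  have hdM : ∀ μ ν : Fin 2, DifferentiableAt ℝ (fun w => levi ρ w μ ν) z := by
    intro μ ν
    exact (contDiffAt_wD (m := 1) (contDiffAt_wDbar (m := 2) (hsm _ z hz) ν) μ).differentiableAt
      (by norm_cast)
  -- determinant of levi is nonzero on U
  have hdet : ∀ w ∈ U, levi ρ w 0 0 * levi ρ w 1 1 - levi ρ w 0 1 * levi ρ w 1 0 ≠ 0 := by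
    intro w hw
    have h := (hPD w hw).det_pos.ne'
    rwa [Matrix.det_fin_two] at h
  -- the explicit (Cramer) formula for Z on U
  set Zf : (Fin 2 → ℂ) → Fin 2 → ℂ := fun w =>
    ![(wDbar ρc w 0 * levi ρ w 1 1 - wDbar ρc w 1 * levi ρ w 1 0) /
        (levi ρ w 0 0 * levi ρ w 1 1 - levi ρ w 0 1 * levi ρ w 1 0),
      (wDbar ρc w 1 * levi ρ w 0 0 - wDbar ρc w 0 * levi ρ w 0 1) /
        (levi ρ w 0 0 * levi ρ w 1 1 - levi ρ w 0 1 * levi ρ w 1 0)] with hZfdef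
  have hZf : ∀ w ∈ U, ∀ μ : Fin 2, Z w μ = Zf w μ := by
    intro w hw μ
    have h0 := hZ w hw 0
    have h1 := hZ w hw 1
    rw [Fin.sum_univ_two] at h0 h1
    fin_cases μ
    · show Z w 0 = Zf w 0
      simp only [hZfdef, Matrix.cons_val_zero]
      rw [eq_div_iff (hdet w hw)]
      linear_combination (levi ρ w 1 1) * h0 - (levi ρ w 1 0) * h1
    · show Z w 1 = Zf w 1
      simp only [hZfdef, Matrix.cons_val_one, Matrix.head_cons, Matrix.cons_val_zero]
      rw [eq_div_iff (hdet w hw)]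
      linear_combination (levi ρ w 0 0) * h1 - (levi ρ w 0 1) * h0
  have hdZf : ∀ μ : Fin 2, DifferentiableAt ℝ (fun w => Zf w μ) z := by
    have hdet2 : DifferentiableAt ℝ
        (fun w => levi ρ w 0 0 * levi ρ w 1 1 - levi ρ w 0 1 * levi ρ w 1 0) z :=
      ((hdM 0 0).mul (hdM 1 1)).sub ((hdM 0 1).mul (hdM 1 0))
    intro μ
    fin_cases μ
    · show DifferentiableAt ℝ (fun w => Zf w 0) z
      simp only [hZfdef, Matrix.cons_val_zero]
      have hnum : DifferentiableAt ℝ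
          (fun w => wDbar ρc w 0 * levi ρ w 1 1 - wDbar ρc w 1 * levi ρ w 1 0) z :=
        ((hdQ 0).mul (hdM 1 1)).sub ((hdQ 1).mul (hdM 1 0))
      have heq : (fun w => (wDbar ρc w 0 * levi ρ w 1 1 - wDbar ρc w 1 * levi ρ w 1 0) /
          (levi ρ w 0 0 * levi ρ w 1 1 - levi ρ w 0 1 * levi ρ w 1 0))
          = fun w => (wDbar ρc w 0 * levi ρ w 1 1 - wDbar ρc w 1 * levi ρ w 1 0) *
          (levi ρ w 0 0 * levi ρ w 1 1 - levi ρ w 0 1 * levi ρ w 1 0)⁻¹ := by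
        funext w; rw [div_eq_mul_inv]
      rw [heq]
      exact hnum.mul (hdet2.inv (hdet z hz))
    · show DifferentiableAt ℝ (fun w => Zf w 1) z
      simp only [hZfdef, Matrix.cons_val_one, Matrix.head_cons, Matrix.cons_val_zero]
      have hnum : DifferentiableAt ℝ
          (fun w => wDbar ρc w 1 * levi ρ w 0 0 - wDbar ρc w 0 * levi ρ w 0 1) z :=
        ((hdQ 1).mul (hdM 0 0)).sub ((hdQ 0).mul (hdM 0 1))
      have heq : (fun w => (wDbar ρc w 1 * levi ρ w 0 0 - wDbar ρc w 0 * levi ρ w 0 1) /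
          (levi ρ w 0 0 * levi ρ w 1 1 - levi ρ w 0 1 * levi ρ w 1 0))
          = fun w => (wDbar ρc w 1 * levi ρ w 0 0 - wDbar ρc w 0 * levi ρ w 0 1) *
          (levi ρ w 0 0 * levi ρ w 1 1 - levi ρ w 0 1 * levi ρ w 1 0)⁻¹ := by
        funext w; rw [div_eq_mul_inv]
      rw [heq]
      exact hnum.mul (hdet2.inv (hdet z hz))
  have hZev : ∀ μ : Fin 2, (fun w => Z w μ) =ᶠ[nhds z] (fun w => Zf w μ) := by
    intro μ
    exact Filter.eventuallyEq_of_mem (hU.mem_nhds hz) (fun w hw => hZf w hw μ)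
  -- differentiating the Monge-Ampère equation in the anti-holomorphic directions
  have key : ∀ σ : Fin 2,
      wD ρc z 0 * wDbar (fun w => Z w 0) z σ + wD ρc z 1 * wDbar (fun w => Z w 1) z σ = 0 := by
    intro σ
    have hG : (fun w => Zf w 0 * wD ρc w 0 + Zf w 1 * wD ρc w 1) =ᶠ[nhds z] ρc := by
      refine Filter.eventuallyEq_of_mem (hU.mem_nhds hz) (fun w hw => ?_)
      have h := hMA w hw
      rw [Fin.sum_univ_two] at h
      show Zf w 0 * wD ρc w 0 + Zf w 1 * wD ρc w 1 = ρc w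
      rw [← hZf w hw 0, ← hZf w hw 1]
      exact h
    have e := wDbar_congr hG σ
    rw [wDbar_add ((hdZf 0).fun_mul (hdP 0)) ((hdZf 1).fun_mul (hdP 1)),
      wDbar_mul (hdZf 0) (hdP 0), wDbar_mul (hdZf 1) (hdP 1)] at e
    rw [hlev z hz 0 σ, hlev z hz 1 σ, ← hZf z hz 0, ← hZf z hz 1] at e
    have hzeq := hZ z hz σ
    rw [Fin.sum_univ_two] at hzeq
    rw [wDbar_congr (hZev 0) σ, wDbar_congr (hZev 1) σ]
    linear_combination e - hzeq
  -- (P0, P1) ≠ 0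
  have hρz : (ρ z : ℂ) ≠ 0 := by
    exact_mod_cast (hpos z hz).ne'
  have hPne : ¬(wD ρc z 0 = 0 ∧ wD ρc z 1 = 0) := by
    rintro ⟨h0, h1⟩
    have h := hMA z hz
    rw [Fin.sum_univ_two] at h
    rw [show wD (fun w => (ρ w : ℂ)) z 0 = wD ρc z 0 from rfl,
      show wD (fun w => (ρ w : ℂ)) z 1 = wD ρc z 1 from rfl, h0, h1] at h
    simp at h
    exact hρz h.symm
  -- the proportionality coefficients
  set c : Fin 2 → ℂ := fun σ =>
    if wD ρc z 1 = 0 then -(wDbar (fun w => Z w 1) z σ) / wD ρc z 0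
    else wDbar (fun w => Z w 0) z σ / wD ρc z 1 with hcdef
  have hL0 : Lfield ρ z 0 = wD ρc z 1 := rfl
  have hL1 : Lfield ρ z 1 = -(wD ρc z 0) := rfl
  have hc : ∀ σ μ : Fin 2, wDbar (fun w => Z w μ) z σ = c σ * Lfield ρ z μ := by
    intro σ μ
    have hk := key σ
    by_cases h1 : wD ρc z 1 = 0
    · have h0 : wD ρc z 0 ≠ 0 := fun h0 => hPne ⟨h0, h1⟩
      have hA0 : wDbar (fun w => Z w 0) z σ = 0 := by
        rw [h1] at hk
        simp at hk
        rcases hk with hk | hk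
        · exact absurd hk h0
        · exact hk
      fin_cases μ
      · show wDbar (fun w => Z w 0) z σ = c σ * Lfield ρ z 0
        rw [hA0, hL0, h1, mul_zero]
      · show wDbar (fun w => Z w 1) z σ = c σ * Lfield ρ z 1
        rw [hL1, hcdef]
        simp only [h1, if_true]
        field_simp
    · fin_cases μ
      · show wDbar (fun w => Z w 0) z σ = c σ * Lfield ρ z 0
        rw [hL0, hcdef]
        simp only [h1, if_false]
        field_simp
      · show wDbar (fun w => Z w 1) z σ = c σ * Lfield ρ z 1
        rw [hL1, hcdef]
        simp only [h1, if_false]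
        field_simp
        linear_combination hk
  refine ⟨-1, Lfield ρ z 0 * (starRingEnd ℂ) (c 0) + Lfield ρ z 1 * (starRingEnd ℂ) (c 1), ?_⟩
  intro μ
  constructor
  · -- first bracket component: ψ₁ = -1
    have main : ∀ μ' : Fin 2, op01 Z (fun w => Lfield ρ w μ') z = Lfield ρ z μ' := by
      intro μ'
      fin_cases μ'
      · show op01 Z (fun w => Lfield ρ w 0) z = Lfield ρ z 0
        have hfun : (fun w => Lfield ρ w 0) = fun w => wD ρc w 1 := rfl
        rw [hfun, hL0]
        simp only [op01, Fin.sum_univ_two]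
        rw [hlev z hz 1 0, hlev z hz 1 1, ← hherm 0 1, ← hherm 1 1]
        have hq := hZ z hz 1
        rw [Fin.sum_univ_two] at hq
        calc (starRingEnd ℂ) (Z z 0) * (starRingEnd ℂ) (levi ρ z 0 1)
              + (starRingEnd ℂ) (Z z 1) * (starRingEnd ℂ) (levi ρ z 1 1)
            = (starRingEnd ℂ) (Z z 0 * levi ρ z 0 1 + Z z 1 * levi ρ z 1 1) := by
              rw [map_add, _root_.map_mul, _root_.map_mul]
          _ = (starRingEnd ℂ) (wDbar ρc z 1) := by rw [hq]
          _ = wD ρc z 1 := hconjQ z 1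
      · show op01 Z (fun w => Lfield ρ w 1) z = Lfield ρ z 1
        have hfun : (fun w => Lfield ρ w 1) = fun w => -(wD ρc w 0) := rfl
        rw [hfun, hL1]
        simp only [op01, Fin.sum_univ_two, wDbar_neg]
        rw [hlev z hz 0 0, hlev z hz 0 1, ← hherm 0 0, ← hherm 1 0]
        have hq := hZ z hz 0
        rw [Fin.sum_univ_two] at hq
        calc (starRingEnd ℂ) (Z z 0) * -(starRingEnd ℂ) (levi ρ z 0 0)
              + (starRingEnd ℂ) (Z z 1) * -(starRingEnd ℂ) (levi ρ z 1 0)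
            = -((starRingEnd ℂ) (Z z 0 * levi ρ z 0 0 + Z z 1 * levi ρ z 1 0)) := by
              rw [map_add, _root_.map_mul, _root_.map_mul]; ring
          _ = -((starRingEnd ℂ) (wDbar ρc z 0)) := by rw [hq]
          _ = -(wD ρc z 0) := by rw [hconjQ z 0]
    rw [main μ]
    ring
  · -- second bracket component
    simp only [op10, Fin.sum_univ_two]
    rw [wD_conj (fun w => Z w μ) z 0, wD_conj (fun w => Z w μ) z 1, hc 0 μ, hc 1 μ,
      _root_.map_mul, _root_.map_mul]
    ring
end

section
/- Let U ⊆ ℂ² be open and ρ : U → ℝ of class C² with ρ(z) > 0 and Levi matrix H(ρ)(z) positive definite at a point z ∈ U, and suppose the complex gradient Z satisfies Z(ρ)(z) := Σ_μ Z^μ(z)·∂ρ/∂z_μ(z) = ρ(z). Let L(z) = (∂ρ/∂z₂(z), −∂ρ/∂z₁(z)). Then Σ_{μ,ν} ρ_{μν̄}(z)·L^μ(z)·conj(L^ν(z)) = det H(ρ)(z) · ρ(z); i.e. the Levi form of ρ evaluated on (L, L̄) equals D·ρ, where D = det H(ρ). -/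
open Complex Matrix
open scoped ComplexOrder

open ComplexConjugate

/-
With `J` the rotation `(x₀, x₁) ↦ (x₁, -x₀)` one has `L = J ∂ρ` and `L̄ = J ∂̄ρ`, while the
defining equation of `Z` says `∂̄ρ = Hᵀ Z`. For `2 × 2` matrices `Jᵀ H J = (adj H)ᵀ`, so the
Levi form on `(L, L̄)` is `∂ρᵀ (adj H)ᵀ Hᵀ Z = det H · Z(ρ) = det H · ρ`.
-/

theorem Matrix.sum_sum_mul_rot_mul_rot_vecMul {R : Type*} [CommRing R]
    (H : Matrix (Fin 2) (Fin 2) R) (Z a : Fin 2 → R) :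
    ∑ μ : Fin 2, ∑ ν : Fin 2, H μ ν * ![a 1, -a 0] μ * ![(Z ᵥ* H) 1, -(Z ᵥ* H) 0] ν =
      H.det * (Z ⬝ᵥ a) := by
  simp only [Fin.sum_univ_two, vecMul, dotProduct, det_fin_two, cons_val_zero, cons_val_one]
  ring

theorem conj_fderiv_ofReal {E : Type*} [NormedAddCommGroup E] [NormedSpace ℝ E]
    (ρ : E → ℝ) (z v : E) :
    conj (fderiv ℝ (fun w => (ρ w : ℂ)) z v) = fderiv ℝ (fun w => (ρ w : ℂ)) z v := by
  have hconj : (conjLIE ∘ fun w => (ρ w : ℂ)) = fun w => (ρ w : ℂ) :=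
    funext fun w => conj_ofReal (ρ w)
  have hcomp := congrArg (fun L : E →L[ℝ] ℂ => L v)
    (conjLIE.comp_fderiv (f := fun w => (ρ w : ℂ)) (x := z))
  simpa [hconj] using hcomp.symm

theorem conj_wD_ofReal {n : ℕ} (ρ : (Fin n → ℂ) → ℝ) (z : Fin n → ℂ) (μ : Fin n) :
    conj (wD (fun w => (ρ w : ℂ)) z μ) = wDbar (fun w => (ρ w : ℂ)) z μ := by
  simp only [wD, wDbar, map_mul, map_sub, map_div₀, map_one, map_ofNat, conj_I,
    conj_fderiv_ofReal]
  ring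

theorem conj_Lfield (ρ : (Fin 2 → ℂ) → ℝ) (z : Fin 2 → ℂ) :
    (fun ν => conj (Lfield ρ z ν)) =
      ![wDbar (fun w => (ρ w : ℂ)) z 1, -wDbar (fun w => (ρ w : ℂ)) z 0] := by
  ext ν
  fin_cases ν <;> simp [Lfield, ← conj_wD_ofReal]

theorem leviForm_L_Lbar_general (ρ : (Fin 2 → ℂ) → ℝ) (z : Fin 2 → ℂ) (Z : Fin 2 → ℂ)
    (hZ : ∀ ν : Fin 2, ∑ μ : Fin 2, Z μ * levi ρ z μ ν = wDbar (fun w => (ρ w : ℂ)) z ν)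
    (hMA : ∑ μ : Fin 2, Z μ * wD (fun w => (ρ w : ℂ)) z μ = (ρ z : ℂ)) :
    ∑ μ : Fin 2, ∑ ν : Fin 2,
        levi ρ z μ ν * Lfield ρ z μ * (starRingEnd ℂ) (Lfield ρ z ν) =
      (levi ρ z).det * (ρ z : ℂ) := by
  have hvecMul : Z ᵥ* levi ρ z = wDbar (fun w => (ρ w : ℂ)) z := funext hZ
  have hLbar := congrFun (conj_Lfield ρ z)
  simp only [hLbar, ← hvecMul]
  rw [← hMA]
  exact sum_sum_mul_rot_mul_rot_vecMul (levi ρ z) Z _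

/-- The Levi form of `ρ` evaluated on `(L, L̄)` equals `det H(ρ) · ρ`. -/
theorem leviForm_L_Lbar (U : Set (Fin 2 → ℂ)) (hU : IsOpen U)
    (ρ : (Fin 2 → ℂ) → ℝ) (hρ : ContDiffOn ℝ 2 ρ U)
    (z : Fin 2 → ℂ) (hz : z ∈ U) (hpos : 0 < ρ z)
    (hPD : (levi ρ z).PosDef)
    (Z : Fin 2 → ℂ)
    (hZ : ∀ ν : Fin 2, ∑ μ : Fin 2, Z μ * levi ρ z μ ν = wDbar (fun w => (ρ w : ℂ)) z ν)
    (hMA : ∑ μ : Fin 2, Z μ * wD (fun w => (ρ w : ℂ)) z μ = (ρ z : ℂ)) :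
    ∑ μ : Fin 2, ∑ ν : Fin 2,
        levi ρ z μ ν * Lfield ρ z μ * (starRingEnd ℂ) (Lfield ρ z ν) =
      (levi ρ z).det * (ρ z : ℂ) :=
  leviForm_L_Lbar_general ρ z Z hZ hMA
end

section
/- Let c₁, c₂ ∈ ℝ and let ρ : ℂ² \ {0} → ℝ be differentiable over ℝ and satisfy c₁·z₁·∂ρ/∂z₁(z) + c₂·z₂·∂ρ/∂z₂(z) = ρ(z) for every z ∈ ℂ² \ {0} (i.e. Z(ρ) = ρ for the vector field Z = c₁z₁·∂/∂z₁ + c₂z₂·∂/∂z₂). Then for every λ ∈ ℂ and every z ∈ ℂ² \ {0}, ρ(e^{c₁λ}·z₁, e^{c₂λ}·z₂) = |e^{λ}|²·ρ(z). -/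
/-!
For real-valued `ρ`, `Dρ(z)v = 2 Re Σ_μ v_μ ∂ρ/∂z_μ(z)`. The map `linearFlow c s`,
`z ↦ (e^{c_μ s} z_μ)_μ`, is the complex flow of `Z = Σ_μ c_μ z_μ ∂/∂z_μ`, so the orbit
`t ↦ linearFlow c (tλ) z` has velocity `λ·Z` and `d/dt ρ = 2 Re(λ·Zρ) = 2 Re λ · ρ`.
Hence `ρ(linearFlow c λ z) = e^{2 Re λ} ρ(z) = |e^λ|² ρ(z)`.
-/

open Complex Matrix
open scoped ComplexOrder

section

variable {n : ℕ}

theorem fderiv_apply_eq_two_mul_re_sum_wD {ρ : (Fin n → ℂ) → ℝ} {w : Fin n → ℂ}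
    (h : DifferentiableAt ℝ ρ w) (v : Fin n → ℂ) :
    fderiv ℝ ρ w v = (2 * ∑ μ, v μ * wD (fun w' => (ρ w' : ℂ)) w μ).re := by
  have hcomp : fderiv ℝ (fun w' => (ρ w' : ℂ)) w = ofRealCLM.comp (fderiv ℝ ρ w) :=
    (ofRealCLM.hasFDerivAt.comp w h.hasFDerivAt).fderiv
  have hsingle : ∀ μ, fderiv ℝ ρ w (Pi.single μ (v μ)) =
      (2 * (v μ * wD (fun w' => (ρ w' : ℂ)) w μ)).re := by
    intro μ
    have hv : (Pi.single μ (v μ) : Fin n → ℂ) =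
        (v μ).re • (Pi.single μ 1 : Fin n → ℂ) + (v μ).im • (Pi.single μ I : Fin n → ℂ) := by
      rw [← Pi.single_smul, ← Pi.single_smul, ← Pi.single_add, real_smul, real_smul,
        mul_one, re_add_im]
    have hwD : 2 * (v μ * wD (fun w' => (ρ w' : ℂ)) w μ) =
        v μ * (fderiv ℝ ρ w (Pi.single μ 1) - I * fderiv ℝ ρ w (Pi.single μ I)) := by
      rw [wD, hcomp, ContinuousLinearMap.comp_apply, ContinuousLinearMap.comp_apply,
        ofRealCLM_apply, ofRealCLM_apply]
      ring
    rw [hv, map_add, map_smul, map_smul, hwD]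
    simp [mul_re]
  conv_lhs => rw [← Finset.univ_sum_single v]
  rw [map_sum, Finset.mul_sum, re_sum]
  exact Finset.sum_congr rfl fun μ _ => hsingle μ

theorem eq_exp_mul_of_hasDerivAt_mul_self {f : ℝ → ℝ} {k : ℝ}
    (hf : ∀ t, HasDerivAt f (k * f t) t) (t : ℝ) : f t = Real.exp (k * t) * f 0 := by
  have hderiv : ∀ s, HasDerivAt (fun s => Real.exp (-(k * s)) * f s) 0 s := by
    intro s
    have hexp : HasDerivAt (fun s => Real.exp (-(k * s))) (Real.exp (-(k * s)) * -(k * 1)) s :=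
      ((hasDerivAt_id s).const_mul k).neg.exp
    exact (hexp.mul (hf s)).congr_deriv (by ring)
  have hconst := is_const_of_deriv_eq_zero (fun s => (hderiv s).differentiableAt)
    (fun s => (hderiv s).deriv) t 0
  simp only [mul_zero, neg_zero, Real.exp_zero, one_mul] at hconst
  rw [← hconst, ← mul_assoc, ← Real.exp_add, add_neg_cancel, Real.exp_zero, one_mul]

noncomputable def linearFlow (c : Fin n → ℂ) (s : ℂ) (z : Fin n → ℂ) : Fin n → ℂ :=
  fun μ => exp (c μ * s) * z μ

theorem linearFlow_zero (c : Fin n → ℂ) (z : Fin n → ℂ) : linearFlow c 0 z = z := by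
  ext μ
  simp [linearFlow]

theorem linearFlow_eq_zero_iff {c : Fin n → ℂ} {s : ℂ} {z : Fin n → ℂ} :
    linearFlow c s z = 0 ↔ z = 0 := by
  simp [linearFlow, funext_iff, exp_ne_zero]

theorem hasDerivAt_linearFlow_ofReal_mul (c : Fin n → ℂ) (lam : ℂ) (z : Fin n → ℂ)
    (t : ℝ) :
    HasDerivAt (fun t : ℝ => linearFlow c (t * lam) z)
      (fun μ => lam * (c μ * linearFlow c (t * lam) z μ)) t := by
  rw [hasDerivAt_pi]
  intro μ
  have h : HasDerivAt (fun s : ℂ => exp (c μ * (s * lam)) * z μ)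
      (exp (c μ * (t * lam)) * (c μ * (1 * lam)) * z μ) t :=
    (((hasDerivAt_id (t : ℂ)).mul_const lam).const_mul (c μ)).cexp.mul_const (z μ)
  exact h.comp_ofReal.congr_deriv (by simp only [linearFlow]; ring)

theorem apply_linearFlow_of_sum_mul_wD_eq (c : Fin n → ℂ) {ρ : (Fin n → ℂ) → ℝ}
    (hdiff : ∀ z : Fin n → ℂ, z ≠ 0 → DifferentiableAt ℝ ρ z)
    (hPDE : ∀ z : Fin n → ℂ, z ≠ 0 → ∑ μ, c μ * z μ * wD (fun w => (ρ w : ℂ)) z μ = ρ z)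
    (lam : ℂ) {z : Fin n → ℂ} (hz : z ≠ 0) :
    ρ (linearFlow c lam z) = ‖exp lam‖ ^ 2 * ρ z := by
  have hflow : ∀ t : ℝ, HasDerivAt (fun t : ℝ => ρ (linearFlow c (t * lam) z))
      (2 * lam.re * ρ (linearFlow c (t * lam) z)) t := by
    intro t
    have hne : linearFlow c (t * lam) z ≠ 0 := linearFlow_eq_zero_iff.not.mpr hz
    refine ((hdiff _ hne).hasFDerivAt.comp_hasDerivAt t
      (hasDerivAt_linearFlow_ofReal_mul c lam z t)).congr_deriv ?_
    rw [fderiv_apply_eq_two_mul_re_sum_wD (hdiff _ hne)]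
    have hsum : ∑ μ, lam * (c μ * linearFlow c (t * lam) z μ) *
          wD (fun w => (ρ w : ℂ)) (linearFlow c (t * lam) z) μ =
        lam * ρ (linearFlow c (t * lam) z) := by
      rw [← hPDE _ hne, Finset.mul_sum]
      exact Finset.sum_congr rfl fun μ _ => by ring
    rw [hsum, ← mul_assoc, re_mul_ofReal]
    simp
  have h1 := eq_exp_mul_of_hasDerivAt_mul_self hflow 1
  simp only [ofReal_one, one_mul, ofReal_zero, zero_mul, linearFlow_zero, mul_one] at h1
  rw [h1, norm_exp, ← Real.exp_nat_mul, Nat.cast_ofNat]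

end

/-- If `Z(ρ) = ρ` for the linear vector field `Z = c₁z₁∂/∂z₁ + c₂z₂∂/∂z₂` on `ℂ² \ {0}`,
then `ρ(e^{c₁λ}z₁, e^{c₂λ}z₂) = |e^λ|²·ρ(z)`. -/
theorem rho_homogeneity_of_linear_gradient (c₁ c₂ : ℝ) (ρ : (Fin 2 → ℂ) → ℝ)
    (hdiff : ∀ z : Fin 2 → ℂ, z ≠ 0 → DifferentiableAt ℝ ρ z)
    (hPDE : ∀ z : Fin 2 → ℂ, z ≠ 0 →
      (c₁ : ℂ) * z 0 * wD (fun w => (ρ w : ℂ)) z 0 +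
        (c₂ : ℂ) * z 1 * wD (fun w => (ρ w : ℂ)) z 1 = (ρ z : ℂ)) :
    ∀ (lam : ℂ) (z : Fin 2 → ℂ), z ≠ 0 →
      ρ ![Complex.exp ((c₁ : ℂ) * lam) * z 0, Complex.exp ((c₂ : ℂ) * lam) * z 1] =
        ‖Complex.exp lam‖ ^ 2 * ρ z := by
  intro lam z hz
  have hflow : ![exp ((c₁ : ℂ) * lam) * z 0, exp ((c₂ : ℂ) * lam) * z 1] =
      linearFlow ![(c₁ : ℂ), c₂] lam z := by
    ext μ
    fin_cases μ <;> rfl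
  rw [hflow]
  refine apply_linearFlow_of_sum_mul_wD_eq _ hdiff (fun w hw => ?_) lam hz
  simpa [Fin.sum_univ_two] using hPDE w hw
end

section
/- Let k ∈ ℕ and let h : ℂ \ {0} → ℝ be of class C² and harmonic, i.e. D²h(λ)(1,1) + D²h(λ)(i,i) = 0 for all λ ≠ 0, where D²h denotes the second real Fréchet derivative. Suppose there exists C ≥ 0 such that |h(λ) − 2k·log|λ|| ≤ C for all λ ∈ ℂ \ {0} (h has a logarithmic singularity of weight 2k at the origin and grows like 2k·log|λ| at infinity, up to a bounded term). Then there exists a constant c ∈ ℝ such that h(λ) = 2k·log|λ| + c for all λ ∈ ℂ \ {0}. -/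
/-!
Pulled back along `exp`, the function `u w = h (exp w) - 2k · Re w` is harmonic on all of `ℂ`:
locally `h` is the real part of a holomorphic function, so `h ∘ exp` is too. The hypothesis says
exactly that `u` is bounded, so `u` is constant by Liouville's theorem for harmonic functions, and
`h λ = 2k log |λ| + u 0` follows by evaluating `u` at a logarithm of `λ`.
-/

open Complex InnerProductSpace Laplacian Metric Filter Topology

theorem laplacian_eq_fderiv_fderiv_complexPlane {F : Type*} [NormedAddCommGroup F]
    [NormedSpace ℝ F] (f : ℂ → F) (z : ℂ) :
    Δ f z = fderiv ℝ (fderiv ℝ f) z 1 1 + fderiv ℝ (fderiv ℝ f) z I I := by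
  simp [laplacian_eq_iteratedFDeriv_complexPlane, iteratedFDeriv_two_apply]

theorem harmonicOnNhd_of_fderiv_fderiv {F : Type*} [NormedAddCommGroup F]
    [NormedSpace ℝ F] {f : ℂ → F} {s : Set ℂ} (hs : IsOpen s) (hf : ContDiffOn ℝ 2 f s)
    (hΔ : ∀ z ∈ s, fderiv ℝ (fderiv ℝ f) z 1 1 + fderiv ℝ (fderiv ℝ f) z I I = 0) :
    HarmonicOnNhd f s := fun z hz ↦
  ⟨hf.contDiffAt (hs.mem_nhds hz), eventually_of_mem (hs.mem_nhds hz) fun w hw ↦ by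
    rw [laplacian_eq_fderiv_fderiv_complexPlane, hΔ w hw, Pi.zero_apply]⟩

theorem InnerProductSpace.HarmonicAt.comp_analyticAt {f : ℂ → ℝ} {g : ℂ → ℂ} {z : ℂ}
    (hf : HarmonicAt f (g z)) (hg : AnalyticAt ℂ g z) : HarmonicAt (f ∘ g) z := by
  obtain ⟨ε, hε, hball⟩ := isOpen_iff.1 (isOpen_setOfPred_harmonicAt f) (g z) hf
  obtain ⟨F, hF, hFf⟩ := HarmonicOnNhd.exists_analyticOnNhd_ball_re_eq hball
  have hg_mem : ∀ᶠ w in 𝓝 z, g w ∈ ball (g z) ε :=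
    hg.continuousAt.preimage_mem_nhds (ball_mem_nhds _ hε)
  refine (harmonicAt_congr_nhds (hg_mem.mono fun w hw ↦ (hFf hw).symm)).2 ?_
  exact ((hF _ (mem_ball_self hε)).comp hg).harmonicAt_re

theorem harmonic_log_singularity_general (k : ℕ) (h : ℂ → ℝ)
    (hC2 : ContDiffOn ℝ 2 h {0}ᶜ)
    (hharm : ∀ lam : ℂ, lam ≠ 0 →
      fderiv ℝ (fderiv ℝ h) lam 1 1 + fderiv ℝ (fderiv ℝ h) lam Complex.I Complex.I = 0)
    (C : ℝ)
    (hbd : ∀ lam : ℂ, lam ≠ 0 →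
      |h lam - 2 * (k : ℝ) * Real.log ‖lam‖| ≤ C) :
    ∃ c : ℝ, ∀ lam : ℂ, lam ≠ 0 →
      h lam = 2 * (k : ℝ) * Real.log ‖lam‖ + c := by
  have hh : HarmonicOnNhd h {0}ᶜ :=
    harmonicOnNhd_of_fderiv_fderiv isOpen_compl_singleton hC2 hharm
  set u : ℂ → ℝ := fun w ↦ h (exp w) - 2 * k * w.re
  have hu : HarmonicOnNhd u Set.univ := fun w _ ↦
    ((hh _ (exp_ne_zero w)).comp_analyticAt analyticAt_cexp).sub
      (analyticAt_id.harmonicAt_re.const_smul (c := 2 * (k : ℝ)))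
  have hu_bdd : Bornology.IsBounded (Set.range u) := by
    refine isBounded_iff_forall_norm_le.2 ⟨C, ?_⟩
    rintro - ⟨w, rfl⟩
    simpa [u, norm_exp] using hbd (exp w) (exp_ne_zero w)
  refine ⟨u 0, fun lam hlam ↦ ?_⟩
  have hu_log := bounded_harmonic_on_complex_plane_is_constant u hu hu_bdd (log lam) 0
  simp only [u, exp_log hlam, log_re] at hu_log
  linarith

/-- A harmonic function on `ℂ \ {0}` differing from `2k·log|λ|` by a bounded term equals
`2k·log|λ| + c` for some constant `c`. -/
theorem harmonic_log_singularity (k : ℕ) (h : ℂ → ℝ)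
    (hC2 : ContDiffOn ℝ 2 h {0}ᶜ)
    (hharm : ∀ lam : ℂ, lam ≠ 0 →
      fderiv ℝ (fderiv ℝ h) lam 1 1 + fderiv ℝ (fderiv ℝ h) lam Complex.I Complex.I = 0)
    (C : ℝ) (hC : 0 ≤ C)
    (hbd : ∀ lam : ℂ, lam ≠ 0 →
      |h lam - 2 * (k : ℝ) * Real.log ‖lam‖| ≤ C) :
    ∃ c : ℝ, ∀ lam : ℂ, lam ≠ 0 →
      h lam = 2 * (k : ℝ) * Real.log ‖lam‖ + c :=
  harmonic_log_singularity_general k h hC2 hharm C hbd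
end
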